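/- Let f : (-ε₁, ε₁)^d → (-ε₀, ε₀) be a function whose graph G = {(f(x̲), x̲)} is achronal in R = (-ε₀, ε₀) × (-ε₁, ε₁)^d equipped with a continuous time-oriented Lorentzian metric g̃ satisfying |g̃_{μν} - m_{μν}| < δ, where δ is small enough that every vector in the Euclidean cone C⁻_{5/6} is past directed timelike. Then any past directed g̃-timelike curve σ : [0,1] → R with initial point σ(0) in the region B = {(x₀, x̲) : x₀ < f(x̲)} remains in B for all s ∈ [0,1]. -/

import Mathlib

open Set

noncomputable def e0 (d : ℕ) : EuclideanSpace ℝ (Fin (d + 1)) :=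
  EuclideanSpace.single 0 1

/-- The backward Euclidean cone `C⁻_a = -C⁺_a`. -/
def Cneg (d : ℕ) (a : ℝ) : Set (EuclideanSpace ℝ (Fin (d + 1))) :=
  {X | X ≠ 0 ∧ (inner ℝ X (e0 d) : ℝ) / ‖X‖ < -a}

/-- The chart `R = (-ε₀, ε₀) × (-ε₁, ε₁)^d`. -/
def chartBox (d : ℕ) (ε₀ ε₁ : ℝ) : Set (EuclideanSpace ℝ (Fin (d + 1))) :=
  {x | |x 0| < ε₀ ∧ ∀ i : Fin d, |x i.succ| < ε₁}

/-- A past directed timelike curve on `[0,1]`: continuous, and away from finitely many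
parameters it has a derivative lying in the past cone `C⁻_{5/8}` (which contains all past
directed `g̃`-timelike vectors for a metric `g̃` with `|g̃_{μν} - m_{μν}| < δ`, `δ` small). -/
def PastTimelike (d : ℕ) (σ : ℝ → EuclideanSpace ℝ (Fin (d + 1))) : Prop :=
  ContinuousOn σ (Icc 0 1) ∧
    ∃ F : Finset ℝ, ∀ s ∈ Ioo (0 : ℝ) 1 \ (F : Set ℝ),
      ∃ v ∈ Cneg d (5 / 8), HasDerivAt σ v s

/-!
Suppose `σ` reached the graph at a parameter `s > 0`. Prepending to `σ|[0,s]` the vertical segment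
from the graph point above `σ 0` down to `σ 0` gives a past directed timelike curve in the chart
joining two points of the graph, so by achronality these points coincide. But the time coordinate
is nonincreasing along `σ`, so `σ s` lies strictly below that graph point, a contradiction.
-/

variable {d : ℕ}

@[simp]
lemma e0_apply_zero : e0 d 0 = 1 := by
  simp [e0]

@[simp]
lemma e0_apply_succ (i : Fin d) : e0 d i.succ = 0 := by
  simp [e0]

lemma inner_e0 (v : EuclideanSpace ℝ (Fin (d + 1))) : inner ℝ v (e0 d) = v 0 := by
  simp [e0, EuclideanSpace.inner_single_right]

lemma apply_zero_neg_of_mem_Cneg {a : ℝ} (ha : 0 ≤ a) {v : EuclideanSpace ℝ (Fin (d + 1))}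
    (hv : v ∈ Cneg d a) : v 0 < 0 := by
  obtain ⟨hv₀, hlt⟩ := hv
  rw [inner_e0, div_lt_iff₀ (norm_pos_iff.2 hv₀)] at hlt
  nlinarith [mul_nonneg ha (norm_nonneg v)]

lemma smul_mem_Cneg {a c : ℝ} (hc : 0 < c) {v : EuclideanSpace ℝ (Fin (d + 1))}
    (hv : v ∈ Cneg d a) : c • v ∈ Cneg d a := by
  obtain ⟨hv₀, hlt⟩ := hv
  refine ⟨smul_ne_zero hc.ne' hv₀, ?_⟩
  rwa [real_inner_smul_left, norm_smul, Real.norm_of_nonneg hc.le, mul_div_mul_left _ _ hc.ne']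

lemma smul_e0_mem_Cneg {a c : ℝ} (ha : a < 1) (hc : c < 0) : c • e0 d ∈ Cneg d a := by
  have he : ‖e0 d‖ = 1 := by simp [e0]
  refine ⟨smul_ne_zero hc.ne (norm_ne_zero_iff.1 (by simp [he])), ?_⟩
  rw [real_inner_smul_left, inner_e0, e0_apply_zero, norm_smul, he, Real.norm_of_nonpos hc.le,
    mul_one, mul_one, div_neg, div_self hc.ne]
  linarith

theorem antitoneOn_of_hasDerivAt_nonpos_off_finset {g g' : ℝ → ℝ} (F : Finset ℝ) {a b : ℝ}
    (hg : ContinuousOn g (Icc a b)) (hg' : ∀ t ∈ Ioo a b \ ↑F, HasDerivAt g (g' t) t)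
    (hg'₀ : ∀ t ∈ Ioo a b \ ↑F, g' t ≤ 0) : AntitoneOn g (Icc a b) := by
  classical
  induction F using Finset.induction_on generalizing a b with
  | empty =>
    simp only [Finset.coe_empty, sdiff_empty] at hg' hg'₀
    refine antitoneOn_of_hasDerivWithinAt_nonpos (f' := g') (convex_Icc a b) hg ?_ ?_ <;> rw [interior_Icc]
    exacts [fun t ht => (hg' t ht).hasDerivWithinAt, hg'₀]
  | insert t F _ ih =>
    have sub {x y : ℝ} (hax : a ≤ x) (hyb : y ≤ b) (ht : t ∉ Ioo x y) :
        Ioo x y \ ↑F ⊆ Ioo a b \ ↑(insert t F) := by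
      rintro s ⟨hs, hsF⟩
      refine ⟨⟨hax.trans_lt hs.1, hs.2.trans_le hyb⟩, ?_⟩
      rw [Finset.coe_insert, mem_insert_iff, not_or]
      exact ⟨fun hst => ht (hst ▸ hs), hsF⟩
    have key {x y : ℝ} (hax : a ≤ x) (hyb : y ≤ b) (ht : t ∉ Ioo x y) :
        AntitoneOn g (Icc x y) :=
      ih (hg.mono (Icc_subset_Icc hax hyb)) (fun s hs => hg' s (sub hax hyb ht hs))
        (fun s hs => hg'₀ s (sub hax hyb ht hs))
    by_cases ht : t ∈ Ioo a b
    · rw [← Icc_union_Icc_eq_Icc ht.1.le ht.2.le]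
      exact (key le_rfl ht.2.le fun h => h.2.false).union_right
        (key ht.1.le le_rfl fun h => h.1.false) (isGreatest_Icc ht.1.le) (isLeast_Icc ht.2.le)
    · exact key le_rfl le_rfl ht

theorem PastTimelike.antitoneOn_time {σ : ℝ → EuclideanSpace ℝ (Fin (d + 1))}
    (hσ : PastTimelike d σ) : AntitoneOn (fun t => σ t 0) (Icc 0 1) := by
  obtain ⟨hσc, F, hF⟩ := hσ
  choose! v hv hσv using hF
  exact antitoneOn_of_hasDerivAt_nonpos_off_finset (g' := fun t => v t 0) F
    ((EuclideanSpace.proj 0).continuous.comp_continuousOn hσc)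
    (fun t ht => (EuclideanSpace.proj (0 : Fin (d + 1)) (𝕜 := ℝ)).hasFDerivAt.comp_hasDerivAt t (hσv t ht))
    (fun t ht => (apply_zero_neg_of_mem_Cneg (by norm_num) (hv t ht)).le)

theorem PastTimelike.exists_hasDerivAt_comp_affine {σ : ℝ → EuclideanSpace ℝ (Fin (d + 1))}
    (hσ : PastTimelike d σ) {k : ℝ} (hk : 0 < k) (b : ℝ) :
    ∃ F : Finset ℝ, ∀ u, k * u + b ∈ Ioo 0 1 → u ∉ F →
      ∃ v ∈ Cneg d (5 / 8), HasDerivAt (fun u => σ (k * u + b)) v u := by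
  obtain ⟨-, F, hF⟩ := hσ
  refine ⟨F.image fun s => (s - b) / k, fun u hu huF => ?_⟩
  have hF' : k * u + b ∉ F := fun h => huF (Finset.mem_image.2 ⟨_, h, by field_simp; ring⟩)
  obtain ⟨v, hv, hσv⟩ := hF _ ⟨hu, hF'⟩
  refine ⟨k • v, smul_mem_Cneg hk hv, ?_⟩
  have hk' := ((hasDerivAt_id u).const_mul k).add_const b
  rw [mul_one] at hk'
  exact hσv.scomp u hk'

theorem PastTimelike.comp_mul {σ : ℝ → EuclideanSpace ℝ (Fin (d + 1))} (hσ : PastTimelike d σ)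
    {s : ℝ} (hs : s ∈ Ioc 0 1) : PastTimelike d (fun u => σ (s * u)) := by
  obtain ⟨F, hF⟩ := hσ.exists_hasDerivAt_comp_affine hs.1 0
  simp only [add_zero] at hF
  refine ⟨hσ.1.comp (continuousOn_const.mul continuousOn_id) fun u hu => ?_, F,
    fun u hu => hF u ?_ hu.2⟩
  · exact ⟨mul_nonneg hs.1.le hu.1, mul_le_one₀ hs.2 hu.1 hu.2⟩
  · exact ⟨mul_pos hs.1 hu.1.1, by nlinarith [hu.1.1, hu.1.2, hs.2]⟩

theorem pastTimelike_add_smul (p : EuclideanSpace ℝ (Fin (d + 1)))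
    {v : EuclideanSpace ℝ (Fin (d + 1))} (hv : v ∈ Cneg d (5 / 8)) :
    PastTimelike d (fun u => p + u • v) :=
  ⟨by fun_prop, ∅, fun u _ => ⟨v, hv, by simpa using ((hasDerivAt_id u).smul_const v).const_add p⟩⟩

noncomputable def curveAppend {E : Type*} (γ₁ γ₂ : ℝ → E) (u : ℝ) : E :=
  if u ≤ 1 / 2 then γ₁ (2 * u) else γ₂ (2 * u - 1)

section curveAppend

variable {E : Type*} {γ₁ γ₂ : ℝ → E}

@[simp]
lemma curveAppend_zero : curveAppend γ₁ γ₂ 0 = γ₁ 0 := by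
  simp [curveAppend]

@[simp]
lemma curveAppend_one : curveAppend γ₁ γ₂ 1 = γ₂ 1 := by
  norm_num [curveAppend]

lemma curveAppend_mem {S : Set E} (h₁ : ∀ u ∈ Icc (0 : ℝ) 1, γ₁ u ∈ S)
    (h₂ : ∀ u ∈ Icc (0 : ℝ) 1, γ₂ u ∈ S) : ∀ u ∈ Icc (0 : ℝ) 1, curveAppend γ₁ γ₂ u ∈ S := by
  intro u hu
  unfold curveAppend
  split_ifs with hu'
  · exact h₁ _ ⟨by linarith [hu.1], by linarith⟩
  · exact h₂ _ ⟨by linarith, by linarith [hu.2]⟩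

end curveAppend

theorem PastTimelike.append {γ₁ γ₂ : ℝ → EuclideanSpace ℝ (Fin (d + 1))}
    (h₁ : PastTimelike d γ₁) (h₂ : PastTimelike d γ₂) (h : γ₁ 1 = γ₂ 0) :
    PastTimelike d (curveAppend γ₁ γ₂) := by
  obtain ⟨F₁, hF₁⟩ := h₁.exists_hasDerivAt_comp_affine two_pos 0
  obtain ⟨F₂, hF₂⟩ := h₂.exists_hasDerivAt_comp_affine two_pos (-1)
  refine ⟨?_, insert (1 / 2) (F₁ ∪ F₂), fun u ⟨hu, huF⟩ => ?_⟩
  · refine ContinuousOn.if ?_ (h₁.1.comp (by fun_prop) fun u hu => ?_)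
      (h₂.1.comp (by fun_prop) fun u hu => ?_)
    · rintro u ⟨-, hu⟩
      rw [show {a : ℝ | a ≤ 1 / 2} = Iic (1 / 2) from rfl, frontier_Iic] at hu
      norm_num [mem_singleton_iff.1 hu, h]
    · rw [show {a : ℝ | a ≤ 1 / 2} = Iic (1 / 2) from rfl, closure_Iic] at hu
      exact ⟨by linarith [hu.1.1], by linarith [hu.2.out]⟩
    · rw [show {a : ℝ | ¬a ≤ 1 / 2} = Ioi (1 / 2) by ext; simp, closure_Ioi] at hu
      exact ⟨by linarith [hu.2.out], by linarith [hu.1.2]⟩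
  simp only [Finset.coe_insert, Finset.coe_union, mem_insert_iff, mem_union, not_or] at huF
  obtain ⟨hu₀, hu₁, hu₂⟩ := huF
  rcases lt_or_gt_of_ne hu₀ with hlt | hgt
  · obtain ⟨v, hv, hγv⟩ := hF₁ u ⟨by linarith [hu.1], by linarith⟩ hu₁
    refine ⟨v, hv, hγv.congr_of_eventuallyEq ?_⟩
    filter_upwards [Iio_mem_nhds hlt] with x hx
    rw [curveAppend, if_pos (mem_Iio.1 hx).le, add_zero]
  · obtain ⟨v, hv, hγv⟩ := hF₂ u ⟨by linarith, by linarith [hu.2]⟩ hu₂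
    refine ⟨v, hv, hγv.congr_of_eventuallyEq ?_⟩
    filter_upwards [Ioi_mem_nhds hgt] with x hx
    rw [curveAppend, if_neg (not_le.2 (mem_Ioi.1 hx)), sub_eq_add_neg]

section Graph

variable {ε₀ ε₁ : ℝ} {f : (Fin d → ℝ) → ℝ}

theorem apply_zero_ne_of_achronal (hfr : ∀ x : Fin d → ℝ, (∀ i, |x i| < ε₁) → |f x| < ε₀)
    (hach : ∀ σ : ℝ → EuclideanSpace ℝ (Fin (d + 1)), PastTimelike d σ →
      (∀ s ∈ Icc (0 : ℝ) 1, σ s ∈ chartBox d ε₀ ε₁) →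
      σ 0 ∈ chartBox d ε₀ ε₁ ∩ {x | x 0 = f (fun i => x i.succ)} →
      σ 1 ∈ chartBox d ε₀ ε₁ ∩ {x | x 0 = f (fun i => x i.succ)} →
      σ 0 = σ 1)
    {σ : ℝ → EuclideanSpace ℝ (Fin (d + 1))} (hσ : PastTimelike d σ)
    (hσR : ∀ s ∈ Icc (0 : ℝ) 1, σ s ∈ chartBox d ε₀ ε₁)
    (hσ0 : σ 0 0 < f (fun i => σ 0 i.succ)) {s : ℝ} (hs : s ∈ Ioc 0 1) :
    σ s 0 ≠ f (fun i => σ s i.succ) := by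
  intro hσs
  set c := f (fun i => σ 0 i.succ) - σ 0 0 with hc_def
  have hc : 0 < c := sub_pos.2 hσ0
  -- `τ` drops vertically from the point of the graph above `σ 0`, then follows `σ` up to `s`.
  set τ := curveAppend (fun u => (σ 0 + c • e0 d) + u • (-c) • e0 d) (fun u => σ (s * u))
  have hτ : PastTimelike d τ :=
    (pastTimelike_add_smul _ (smul_e0_mem_Cneg (by norm_num) (neg_neg_of_pos hc))).append
      (hσ.comp_mul hs) (by simp)
  have hsegR : ∀ u ∈ Icc (0 : ℝ) 1, (σ 0 + c • e0 d) + u • (-c) • e0 d ∈ chartBox d ε₀ ε₁ := by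
    intro u hu
    obtain ⟨hσ00, hσ0i⟩ := hσR 0 (left_mem_Icc.2 zero_le_one)
    have hf := abs_lt.1 (hfr _ hσ0i)
    refine ⟨?_, by simpa using hσ0i⟩
    simp only [PiLp.add_apply, PiLp.smul_apply, e0_apply_zero, smul_eq_mul]
    rw [abs_lt] at hσ00 ⊢
    constructor <;> nlinarith [hu.1, hu.2]
  have hτR : ∀ u ∈ Icc (0 : ℝ) 1, τ u ∈ chartBox d ε₀ ε₁ :=
    curveAppend_mem hsegR fun u hu =>
      hσR _ ⟨mul_nonneg hs.1.le hu.1, mul_le_one₀ hs.2 hu.1 hu.2⟩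
  have hτ01 := hach τ hτ hτR ⟨hτR 0 (left_mem_Icc.2 zero_le_one), by simp [τ, hc_def]⟩
    ⟨hτR 1 (right_mem_Icc.2 zero_le_one), by simpa [τ] using hσs⟩
  have hτ01₀ := congrArg (· 0) hτ01
  simp only [τ, curveAppend_zero, curveAppend_one, zero_smul, add_zero, mul_one, PiLp.add_apply,
    PiLp.smul_apply, e0_apply_zero, smul_eq_mul] at hτ01₀
  have hσs₀ : σ s 0 ≤ σ 0 0 :=
    hσ.antitoneOn_time (left_mem_Icc.2 zero_le_one) (Ioc_subset_Icc_self hs) hs.1.le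
  linarith

end Graph

theorem stmt_15_general (d : ℕ) (ε₀ ε₁ : ℝ)
    (f : (Fin d → ℝ) → ℝ)
    (hfc : Continuous f)
    (hfr : ∀ x : Fin d → ℝ, (∀ i, |x i| < ε₁) → |f x| < ε₀)
    (hach : ∀ σ : ℝ → EuclideanSpace ℝ (Fin (d + 1)), PastTimelike d σ →
      (∀ s ∈ Icc (0 : ℝ) 1, σ s ∈ chartBox d ε₀ ε₁) →
      σ 0 ∈ chartBox d ε₀ ε₁ ∩ {x | x 0 = f (fun i => x i.succ)} →
      σ 1 ∈ chartBox d ε₀ ε₁ ∩ {x | x 0 = f (fun i => x i.succ)} →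
      σ 0 = σ 1)
    (σ : ℝ → EuclideanSpace ℝ (Fin (d + 1)))
    (hσ : PastTimelike d σ)
    (hσR : ∀ s ∈ Icc (0 : ℝ) 1, σ s ∈ chartBox d ε₀ ε₁)
    (hσ0 : σ 0 0 < f (fun i => σ 0 i.succ)) :
    ∀ s ∈ Icc (0 : ℝ) 1, σ s 0 < f (fun i => σ s i.succ) := by
  intro s hs
  by_contra! hσs
  have hgap : ContinuousOn (fun t => σ t 0 - f (fun i => σ t i.succ)) (Icc 0 s) := by
    refine (ContinuousOn.sub ?_ (hfc.comp_continuousOn (continuousOn_pi.2 fun i => ?_))).mono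
      (Icc_subset_Icc_right hs.2) <;>
    exact (EuclideanSpace.proj _ (𝕜 := ℝ)).continuous.comp_continuousOn hσ.1
  obtain ⟨t, ht, hσt⟩ := intermediate_value_Icc hs.1 hgap ⟨(sub_neg.2 hσ0).le, sub_nonneg.2 hσs⟩
  have ht₀ : t ≠ 0 := by rintro rfl; exact (sub_neg.2 hσ0).ne hσt
  exact apply_zero_ne_of_achronal hfr hach hσ hσR hσ0
    ⟨lt_of_le_of_ne ht.1 (Ne.symm ht₀), ht.2.trans hs.2⟩ (sub_eq_zero.1 hσt)

/-- Let `f : (-ε₁, ε₁)^d → (-ε₀, ε₀)` be continuous with achronal graph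
`G` in the chart `R` (no past directed timelike curve in `R` joins two distinct points of
`G`). Then any past directed timelike curve `σ` in `R` starting in the below-graph region
`B = {x₀ < f(x̲)}` remains in `B`. -/
theorem stmt_15 (d : ℕ) (ε₀ ε₁ : ℝ) (hε₀ : 0 < ε₀) (hε₁ : 0 < ε₁)
    (f : (Fin d → ℝ) → ℝ)
    (hfc : Continuous f)
    (hfr : ∀ x : Fin d → ℝ, (∀ i, |x i| < ε₁) → |f x| < ε₀)
    (hach : ∀ σ : ℝ → EuclideanSpace ℝ (Fin (d + 1)), PastTimelike d σ →
      (∀ s ∈ Icc (0 : ℝ) 1, σ s ∈ chartBox d ε₀ ε₁) →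
      σ 0 ∈ chartBox d ε₀ ε₁ ∩ {x | x 0 = f (fun i => x i.succ)} →
      σ 1 ∈ chartBox d ε₀ ε₁ ∩ {x | x 0 = f (fun i => x i.succ)} →
      σ 0 = σ 1)
    (σ : ℝ → EuclideanSpace ℝ (Fin (d + 1)))
    (hσ : PastTimelike d σ)
    (hσR : ∀ s ∈ Icc (0 : ℝ) 1, σ s ∈ chartBox d ε₀ ε₁)
    (hσ0 : σ 0 0 < f (fun i => σ 0 i.succ)) :
    ∀ s ∈ Icc (0 : ℝ) 1, σ s 0 < f (fun i => σ s i.succ) :=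
  stmt_15_general d ε₀ ε₁ f hfc hfr hach σ hσ hσR hσ0
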